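/- Let V = k·e ⊕ V' over a field k of characteristic ≠ 2, let U ⊆ ⋀²V' be a linear subspace, let x ∈ V' and let y ∈ U with y ≠ 0. Then e ∧ x + y is decomposable in ⋀²V if and only if there exists a 2-dimensional subspace V² ⊆ V' such that x ∈ V², y ∈ ⋀²V², and ⋀²V² ⊆ U. -/

import Mathlib

/-!
Write `e ∧ x + y = a ∧ b` with `a = (a₁, a')`, `b = (b₁, b')`. Projecting `k × V'` onto `V'` kills
`e` and gives `y = a' ∧ b'`; contracting with the `e`-coordinate kills `⋀V'` and gives
`x = a₁ b' - b₁ a'`. So `V² = span {a', b'}` works, and it is a plane because `y ≠ 0`.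
Conversely, `y = c • p ∧ q` for a basis `p, q` of `V²`. If `x = 0` then `y` itself is decomposable;
otherwise `y = x ∧ w` for some `w ∈ V²`, and `e ∧ x + x ∧ w = (e - w) ∧ x`.
-/

open ExteriorAlgebra

theorem Submodule.exists_eq_span_pair_of_finrank_eq_two {k M : Type*} [Field k] [AddCommGroup M]
    [Module k M] {V : Submodule k M} (h : Module.finrank k V = 2) :
    ∃ p q : M, V = Submodule.span k {p, q} := by
  have := Module.finite_of_finrank_eq_succ h
  let b := Module.finBasisOfFinrankEq k V h
  refine ⟨b 0, b 1, ?_⟩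
  calc V = (⊤ : Submodule k V).map V.subtype := V.map_subtype_top.symm
    _ = _ := by
      rw [← b.span_eq, Submodule.map_span, ← Set.range_comp,
        ← Matrix.range_cons_cons_empty _ _ ![]]
      congr 2
      ext i; fin_cases i <;> rfl

namespace ExteriorAlgebra

section CommRing

variable {R M N : Type*} [CommRing R] [AddCommGroup M] [Module R M] [AddCommGroup N] [Module R N]

theorem ι_add_mul_ι_add (p q : M) (a b c d : R) :
    ι R (a • p + b • q) * ι R (c • p + d • q) = (a * d - b * c) • (ι R p * ι R q) := by
  simp only [map_add, map_smul, add_mul, mul_add, smul_mul_assoc, mul_smul_comm, ι_sq_zero,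
    smul_zero, CliffordAlgebra.ι_mul_ι_comm_of_isOrtho (.all q p)]
  module

theorem ι_mul_ι_add_ι_mul_ι (e x w : M) :
    ι R e * ι R x + ι R x * ι R w = ι R (e - w) * ι R x := by
  rw [map_sub, sub_mul, CliffordAlgebra.ι_mul_ι_comm_of_isOrtho (.all x w), sub_eq_add_neg]

theorem ι_mul_ι_mem_exteriorPower_two (p q : M) : ι R p * ι R q ∈ ⋀[R]^2 M := by
  rw [exteriorPower, pow_two]
  exact Submodule.mul_mem_mul (LinearMap.mem_range_self _ _) (LinearMap.mem_range_self _ _)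

theorem exteriorPower_two_le_span_ι_mul_ι {p q : M} (h : Submodule.span R {p, q} = ⊤) :
    ⋀[R]^2 M ≤ Submodule.span R {ι R p * ι R q} := by
  rw [← ιMulti_span_fixedDegree, Submodule.span_le]
  rintro _ ⟨f, rfl⟩
  obtain ⟨a, b, hf0⟩ := Submodule.mem_span_pair.mp (h ▸ Submodule.mem_top : f 0 ∈ _)
  obtain ⟨c, d, hf1⟩ := Submodule.mem_span_pair.mp (h ▸ Submodule.mem_top : f 1 ∈ _)
  have hf : ιMulti R 2 f = ι R (f 0) * ι R (f 1) := by
    simp [ιMulti_apply, Matrix.vecTail]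
  rw [SetLike.mem_coe, hf, ← hf0, ← hf1, ι_add_mul_ι_add]
  exact Submodule.smul_mem _ _ (Submodule.mem_span_singleton_self _)

theorem map_exteriorPower_two_span_pair (u v : M) :
    (⋀[R]^2 (Submodule.span R {u, v})).map (map (Submodule.span R {u, v}).subtype).toLinearMap =
      Submodule.span R {ι R u * ι R v} := by
  set V := Submodule.span R {u, v}
  let p : V := ⟨u, Submodule.subset_span (by simp)⟩
  let q : V := ⟨v, Submodule.subset_span (by simp)⟩
  have hpq : map V.subtype (ι R p * ι R q) = ι R u * ι R v := by
    rw [map_mul, map_apply_ι, map_apply_ι]; rfl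
  have hspan : Submodule.span R {p, q} = ⊤ := by
    apply Submodule.map_injective_of_injective V.injective_subtype
    rw [Submodule.map_span, Submodule.map_subtype_top, Set.image_pair]
    rfl
  apply le_antisymm
  · calc _ ≤ (Submodule.span R {ι R p * ι R q}).map (map V.subtype).toLinearMap :=
          Submodule.map_mono (exteriorPower_two_le_span_ι_mul_ι hspan)
      _ = _ := by rw [Submodule.map_span, Set.image_singleton, AlgHom.toLinearMap_apply, hpq]
  · rw [Submodule.span_le, Set.singleton_subset_iff, ← hpq]
    exact Submodule.mem_map_of_mem (ι_mul_ι_mem_exteriorPower_two p q)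

theorem contractLeft_ι_mul_ι (d : Module.Dual R M) (m n : M) :
    CliffordAlgebra.contractLeft (Q := 0) d (ι R m * ι R n) = d m • ι R n - d n • ι R m := by
  rw [CliffordAlgebra.contractLeft_ι_mul, CliffordAlgebra.contractLeft_ι, ← Algebra.commutes,
    ← Algebra.smul_def]

theorem contractLeft_map_eq_zero {f : N →ₗ[R] M} {d : Module.Dual R M} (hd : d ∘ₗ f = 0)
    (w : ExteriorAlgebra R N) : CliffordAlgebra.contractLeft (Q := 0) d (map f w) = 0 := by
  induction w using CliffordAlgebra.left_induction with
  | algebraMap r => rw [AlgHom.commutes, CliffordAlgebra.contractLeft_algebraMap]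
  | add x y hx hy => rw [map_add, map_add, hx, hy, add_zero]
  | ι_mul x m hx =>
    rw [map_mul, map_apply_ι, CliffordAlgebra.contractLeft_ι_mul, hx, mul_zero, sub_zero,
      ← LinearMap.comp_apply, hd, LinearMap.zero_apply, zero_smul]

end CommRing

section Field

variable {k M : Type*} [Field k] [AddCommGroup M] [Module k M]

theorem linearIndependent_pair_of_ι_mul_ι_ne_zero {u v : M} (h : ι k u * ι k v ≠ 0) :
    LinearIndependent k ![u, v] := by
  rw [LinearIndependent.pair_iff]
  intro s t hst
  have hs : s • (ι k u * ι k v) = 0 := by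
    simpa [hst] using (ι_add_mul_ι_add u v s t 0 1).symm
  have ht : t • (ι k u * ι k v) = 0 := by
    simpa [hst] using (ι_add_mul_ι_add u v 1 0 s t).symm
  exact ⟨(smul_eq_zero.mp hs).resolve_right h, (smul_eq_zero.mp ht).resolve_right h⟩

theorem exists_ι_mul_ι_eq_smul_ι_mul_ι {p q x : M} (hx : x ∈ Submodule.span k {p, q})
    (hx0 : x ≠ 0) (c : k) : ∃ w, ι k x * ι k w = c • (ι k p * ι k q) := by
  obtain ⟨α, β, rfl⟩ := Submodule.mem_span_pair.mp hx
  have hdet : ∃ γ δ, α * δ - β * γ = c := by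
    by_cases hα : α = 0
    · have hβ : β ≠ 0 := by rintro rfl; simp [hα] at hx0
      exact ⟨-c / β, 0, by field_simp; ring⟩
    · exact ⟨0, c / α, by rw [mul_zero, sub_zero, mul_div_cancel₀ _ hα]⟩
  obtain ⟨γ, δ, hc⟩ := hdet
  exact ⟨γ • p + δ • q, by rw [ι_add_mul_ι_add, hc]⟩

end Field

end ExteriorAlgebra

section Product

variable {k V' : Type*} [Field k] [AddCommGroup V'] [Module k V']

theorem exists_finrank_eq_two_of_ι_mul_ι_add_map_inr_eq {x : V'} {y : ExteriorAlgebra k V'}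
    (hy : y ≠ 0) {a b : k × V'}
    (hab : ι k ((1 : k), (0 : V')) * ι k ((0 : k), x) + map (LinearMap.inr k k V') y =
      ι k a * ι k b) :
    ∃ V2 : Submodule k V', Module.finrank k V2 = 2 ∧ x ∈ V2 ∧
      (⋀[k]^2 V2).map (map V2.subtype).toLinearMap = Submodule.span k {y} := by
  have hy_eq : y = ι k a.2 * ι k b.2 := by
    have h := congrArg (map (LinearMap.snd k k V')) hab
    rw [map_add, ← AlgHom.comp_apply, map_comp_map, LinearMap.snd_comp_inr, map_id] at h
    simpa only [map_mul, map_apply_ι, LinearMap.snd_apply, map_zero, zero_mul, AlgHom.coe_id,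
      id_eq, zero_add] using h
  have hx_eq : x = a.1 • b.2 - b.1 • a.2 := by
    have h := congrArg (CliffordAlgebra.contractLeft (Q := 0) (LinearMap.fst k k V')) hab
    rw [map_add, contractLeft_ι_mul_ι, contractLeft_ι_mul_ι,
      contractLeft_map_eq_zero (LinearMap.fst_comp_inr k k V')] at h
    simp only [LinearMap.fst_apply, one_smul, zero_smul, sub_zero, add_zero] at h
    rw [← map_smul, ← map_smul, ← map_sub, ι_inj] at h
    simpa using congrArg Prod.snd h
  refine ⟨Submodule.span k {a.2, b.2}, ?_, ?_, ?_⟩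
  · rw [← Matrix.range_cons_cons_empty _ _ ![],
      finrank_span_eq_card (linearIndependent_pair_of_ι_mul_ι_ne_zero (hy_eq ▸ hy)),
      Fintype.card_fin]
  · rw [hx_eq]
    exact sub_mem (Submodule.smul_mem _ _ (Submodule.subset_span (by simp)))
      (Submodule.smul_mem _ _ (Submodule.subset_span (by simp)))
  · rw [map_exteriorPower_two_span_pair, hy_eq]

theorem exists_eq_ι_mul_ι_of_mem_map_exteriorPower_two {V2 : Submodule k V'}
    (hV2 : Module.finrank k V2 = 2) {x : V'} (hx : x ∈ V2) {y : ExteriorAlgebra k V'}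
    (hy : y ∈ (⋀[k]^2 V2).map (map V2.subtype).toLinearMap) :
    ∃ a b : k × V', ι k ((1 : k), (0 : V')) * ι k ((0 : k), x) + map (LinearMap.inr k k V') y =
      ι k a * ι k b := by
  obtain ⟨p, q, rfl⟩ := V2.exists_eq_span_pair_of_finrank_eq_two hV2
  rw [map_exteriorPower_two_span_pair] at hy
  obtain ⟨c, rfl⟩ := Submodule.mem_span_singleton.mp hy
  rcases eq_or_ne x 0 with rfl | hx0
  · refine ⟨(0, c • p), (0, q), ?_⟩
    rw [Prod.mk_zero_zero, map_zero, mul_zero, zero_add, map_smul, map_mul, map_apply_ι,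
      map_apply_ι, ← smul_mul_assoc, ← map_smul, ← map_smul]
    rfl
  · obtain ⟨w, hw⟩ := exists_ι_mul_ι_eq_smul_ι_mul_ι hx hx0 c
    refine ⟨(1, -w), (0, x), ?_⟩
    rw [← hw, map_mul, map_apply_ι, map_apply_ι]
    change ι k _ * ι k (0, x) + ι k (0, x) * ι k (0, w) = _
    rw [ι_mul_ι_add_ι_mul_ι]
    congr 2
    exact Prod.ext (sub_zero 1) (zero_sub w)

end Product

-- `V = k·e ⊕ V'` is modelled as `k × V'` with `e = (1, 0)`.
theorem stmt4_general (k : Type*) [Field k] (V' : Type*)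
    [AddCommGroup V'] [Module k V']
    (U : Submodule k (ExteriorAlgebra k V'))
    (x : V') (y : ExteriorAlgebra k V') (hy : y ∈ U) (hyne : y ≠ 0) :
    (∃ a b : k × V',
        ι k ((1 : k), (0 : V')) * ι k ((0 : k), x)
          + ExteriorAlgebra.map (LinearMap.inr k k V') y = ι k a * ι k b) ↔
      (∃ V2 : Submodule k V', Module.finrank k V2 = 2 ∧ x ∈ V2 ∧
        y ∈ Submodule.map (ExteriorAlgebra.map V2.subtype).toLinearMap (⋀[k]^2 V2) ∧
        Submodule.map (ExteriorAlgebra.map V2.subtype).toLinearMap (⋀[k]^2 V2) ≤ U) := by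
  constructor
  · rintro ⟨a, b, hab⟩
    obtain ⟨V2, hV2, hx, hmap⟩ := exists_finrank_eq_two_of_ι_mul_ι_add_map_inr_eq hyne hab
    refine ⟨V2, hV2, hx, ?_⟩
    rw [hmap]
    exact ⟨Submodule.mem_span_singleton_self y, (Submodule.span_singleton_le_iff_mem y U).mpr hy⟩
  · rintro ⟨V2, hV2, hx, hyV2, -⟩
    exact exists_eq_ι_mul_ι_of_mem_map_exteriorPower_two hV2 hx hyV2

/-- Lemma 2.2 of the paper: for `V = k·e ⊕ V'` (modelled as `k × V'` with `e = (1,0)`),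
a subspace `U ⊆ ⋀²V'`, `x ∈ V'` and `0 ≠ y ∈ U`, the 2-vector `e ∧ x + y` is
decomposable iff there is a 2-dimensional subspace `V² ⊆ V'` with `x ∈ V²`,
`y ∈ ⋀²V²` and `⋀²V² ⊆ U`. -/
theorem stmt4 (k : Type*) [Field k] (h2 : (2 : k) ≠ 0) (V' : Type*)
    [AddCommGroup V'] [Module k V'] [FiniteDimensional k V']
    (U : Submodule k (ExteriorAlgebra k V')) (hU : U ≤ ⋀[k]^2 V')
    (x : V') (y : ExteriorAlgebra k V') (hy : y ∈ U) (hyne : y ≠ 0) :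
    (∃ a b : k × V',
        ι k ((1 : k), (0 : V')) * ι k ((0 : k), x)
          + ExteriorAlgebra.map (LinearMap.inr k k V') y = ι k a * ι k b) ↔
      (∃ V2 : Submodule k V', Module.finrank k V2 = 2 ∧ x ∈ V2 ∧
        y ∈ Submodule.map (ExteriorAlgebra.map V2.subtype).toLinearMap (⋀[k]^2 V2) ∧
        Submodule.map (ExteriorAlgebra.map V2.subtype).toLinearMap (⋀[k]^2 V2) ≤ U) :=
  stmt4_general k V' U x y hy hyne
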